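/- Let p be a prime with p ∉ {2, 3}, let n = p^r · n₀ with r an even positive integer and n₀ a positive integer not divisible by p, and let s be a real number with s > 1/2. Then Σ_{k=0}^∞ C(p^k, −n) · p^{−ks} = ((1 − p^{−2s}) / (1 − p^{−s})) · ( (1 − p^{(1−2s)·r/2}) / (1 − p^{1−2s}) + p^{r/2 − rs} / (1 − (−n₀/p) · p^{−s}) ), where (−n₀/p) is the Legendre symbol of −n₀ modulo p. -/

import Mathlib

/-!
Write `-n = p ^ (2m) * u` with `u = -n₀` prime to `p`. Since `q² ∣ x²` forces `q ∣ x`, the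
solutions of `x² ≡ q² v (mod q² M)` are the `x = q w` with `w² ≡ v (mod M)`, `w` taken modulo
`q M`; so `C (q² M) (q² v) = q * C M v`. For `k ≤ 2m` this gives `C (p^k) (-n) = p ^ ⌊k/2⌋`, and
for `k > 2m` it reduces `C (p^k) (-n)` to `p ^ m * C (p^(k-2m)) u`. Hensel: the kernel of
`(ℤ/p^j)ˣ → (ℤ/p)ˣ` has odd order `p^(j-1)`, so reduction is a bijection on square roots of a
unit and `C (p^j) u = C p u = 1 + (u/p)`. The Dirichlet series is then a finite sum plus a
geometric tail in `t = p^(-s)`, summed in closed form using `p t² = p^(1-2s) < 1`.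
-/

/-- `C m n` is the number of residues `x` modulo `m` with `x² ≡ n (mod m)`. -/
noncomputable def C (m : ℕ) (n : ℤ) : ℕ := Nat.card {x : ZMod m // x ^ 2 = (n : ZMod m)}

open Finset

theorem MonoidHom.card_sq_eq_of_odd_card_ker {G H : Type*} [CommGroup G] [CommGroup H]
    (f : G →* H) (hf : Function.Surjective f) (hker : Odd (Nat.card f.ker)) (a : G) :
    Nat.card {x : G // x ^ 2 = a} = Nat.card {y : H // y ^ 2 = f a} := by
  obtain ⟨c, hc⟩ := hker
  -- by Lagrange `k ^ (2c + 1) = 1`, so `k` is the square of `k ^ (c + 1)`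
  have hroot : ∀ k ∈ f.ker, (k ^ (c + 1)) ^ 2 = k := fun k hk => by
    have hpow : k ^ Nat.card f.ker = 1 := congrArg Subtype.val (pow_card_eq_one' (x := ⟨k, hk⟩))
    rw [hc] at hpow
    rw [← pow_mul, show (c + 1) * 2 = (2 * c + 1) + 1 by ring, pow_succ, hpow, one_mul]
  refine Nat.card_eq_of_bijective (fun x => ⟨f x, by rw [← map_pow, x.2]⟩) ⟨?_, ?_⟩
  · rintro ⟨x₁, hx₁⟩ ⟨x₂, hx₂⟩ h
    have hk : x₁ / x₂ ∈ f.ker := by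
      simpa [MonoidHom.mem_ker, map_div, div_eq_one] using h
    have hk1 : (x₁ / x₂) ^ 2 = 1 := by rw [div_pow, hx₁, hx₂, div_self']
    have h1 := hroot _ hk
    rw [← pow_mul, mul_comm, pow_mul, hk1, one_pow] at h1
    exact Subtype.ext (div_eq_one.mp h1.symm)
  · rintro ⟨y, hy⟩
    obtain ⟨g, rfl⟩ := hf y
    have hk : g ^ 2 / a ∈ f.ker := by
      rw [MonoidHom.mem_ker, map_div, map_pow, hy, div_self']
    refine ⟨⟨g / (g ^ 2 / a) ^ (c + 1), ?_⟩, ?_⟩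
    · rw [div_pow, hroot _ hk, div_div_cancel]
    · have hf1 : f ((g ^ 2 / a) ^ (c + 1)) = 1 := by rw [map_pow, hk, one_pow]
      simp [hf1]

theorem Units.card_sq_eq {M : Type*} [CommMonoid M] (u : Mˣ) :
    Nat.card {x : M // x ^ 2 = u} = Nat.card {g : Mˣ // g ^ 2 = u} := by
  symm
  refine Nat.card_eq_of_bijective (fun g => ⟨g.1, by rw [← Units.val_pow_eq_pow_val, g.2]⟩)
    ⟨fun g₁ g₂ h => Subtype.ext (Units.ext (congrArg Subtype.val h)), ?_⟩
  rintro ⟨x, hx⟩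
  have hunit : IsUnit x := (isUnit_pow_iff two_ne_zero).mp (hx ▸ u.isUnit)
  exact ⟨⟨hunit.unit, Units.ext (by simpa using hx)⟩, rfl⟩

theorem ZMod.card_ker_unitsMap_prime_pow {p k : ℕ} [hp : Fact p.Prime] (hk : k ≠ 0) :
    Nat.card (ZMod.unitsMap (dvd_pow_self p hk)).ker = p ^ (k - 1) := by
  have h := (ZMod.unitsMap (dvd_pow_self p hk)).ker.card_mul_index
  rw [Subgroup.index_ker, MonoidHom.range_eq_top.mpr (ZMod.unitsMap_surjective _),
    Subgroup.card_top, Nat.card_eq_fintype_card (α := (ZMod p)ˣ),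
    Nat.card_eq_fintype_card (α := (ZMod (p ^ k))ˣ), ZMod.card_units,
    ZMod.card_units_eq_totient, Nat.totient_prime_pow hp.out (Nat.pos_of_ne_zero hk)] at h
  exact Nat.eq_of_mul_eq_mul_right (Nat.sub_pos_of_lt hp.out.one_lt) h

theorem Nat.count_mul_of_periodic {P : ℕ → Prop} [DecidablePred P] {a : ℕ}
    (hP : Function.Periodic P a) (q : ℕ) : Nat.count P (q * a) = q * Nat.count P a := by
  induction q with
  | zero => simp
  | succ q ih =>
    have hshift : ∀ k, P (q * a + k) ↔ P k := fun k => by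
      rw [add_comm]; exact iff_of_eq (by simpa using (hP.nat_mul q) k)
    rw [add_mul, one_mul, Nat.count_add, ih]
    simp only [hshift]
    ring

theorem Nat.count_mul_of_forall_dvd {P : ℕ → Prop} [DecidablePred P] {q : ℕ} (hq : q ≠ 0)
    (hP : ∀ x, P x → q ∣ x) (a : ℕ) :
    Nat.count P (q * a) = Nat.count (fun w => P (q * w)) a := by
  simp only [Nat.count_eq_card_filter_range]
  symm
  rw [← Finset.card_image_of_injective _ (mul_right_injective₀ hq)]
  congr 1
  ext x
  simp only [Finset.mem_filter, Finset.mem_range, Finset.mem_image]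
  constructor
  · rintro ⟨w, ⟨hw, hPw⟩, rfl⟩
    exact ⟨Nat.mul_lt_mul_of_pos_left hw (Nat.pos_of_ne_zero hq), hPw⟩
  · rintro ⟨hx, hPx⟩
    obtain ⟨w, rfl⟩ := hP x hPx
    exact ⟨w, ⟨Nat.lt_of_mul_lt_mul_left hx, hPx⟩, rfl⟩

theorem C_eq_count {m : ℕ} (hm : m ≠ 0) (n : ℤ) :
    C m n = Nat.count (fun x : ℕ => (m : ℤ) ∣ (x : ℤ) ^ 2 - n) m := by
  have : NeZero m := ⟨hm⟩
  rw [Nat.count_eq_card_filter_range, ← Nat.card_eq_finsetCard, C]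
  refine Nat.card_eq_of_bijective (fun x => ⟨x.1.val, ?_⟩) ⟨?_, ?_⟩
  · simp only [Finset.mem_filter, Finset.mem_range]
    refine ⟨x.1.val_lt, ?_⟩
    rw [← ZMod.intCast_zmod_eq_zero_iff_dvd]
    push_cast
    rw [ZMod.natCast_zmod_val, x.2, sub_self]
  · intro x y h
    exact Subtype.ext (ZMod.val_injective m (congrArg Subtype.val h))
  · rintro ⟨k, hk⟩
    simp only [Finset.mem_filter, Finset.mem_range] at hk
    obtain ⟨hk, hdvd⟩ := hk
    refine ⟨⟨k, ?_⟩, Subtype.ext (ZMod.val_natCast_of_lt hk)⟩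
    rw [← sub_eq_zero]
    exact_mod_cast (ZMod.intCast_zmod_eq_zero_iff_dvd _ m).mpr hdvd

theorem C_sq_mul {q m : ℕ} (hq : q ≠ 0) (hm : m ≠ 0) (n : ℤ) :
    C (q ^ 2 * m) ((q : ℤ) ^ 2 * n) = q * C m n := by
  have hq2 : (q : ℤ) ^ 2 ≠ 0 := pow_ne_zero 2 (by exact_mod_cast hq)
  have hdvd : ∀ x : ℕ, (((q ^ 2 * m : ℕ) : ℤ) ∣ (x : ℤ) ^ 2 - q ^ 2 * n) → q ∣ x := by
    intro x hx
    have : (q : ℤ) ^ 2 ∣ (x : ℤ) ^ 2 := by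
      have h := (dvd_mul_right ((q : ℤ) ^ 2) m).trans (by exact_mod_cast hx)
      simpa using (dvd_add h (dvd_mul_right ((q : ℤ) ^ 2) n))
    exact_mod_cast (Int.pow_dvd_pow_iff two_ne_zero).mp this
  have hmul : ∀ w : ℕ, (((q ^ 2 * m : ℕ) : ℤ) ∣ ((q * w : ℕ) : ℤ) ^ 2 - q ^ 2 * n) ↔
      (m : ℤ) ∣ (w : ℤ) ^ 2 - n := by
    intro w
    rw [show ((q * w : ℕ) : ℤ) ^ 2 - q ^ 2 * n = (q : ℤ) ^ 2 * ((w : ℤ) ^ 2 - n) by push_cast; ring]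
    push_cast
    exact mul_dvd_mul_iff_left hq2
  have hperiodic : Function.Periodic (fun x : ℕ => (m : ℤ) ∣ (x : ℤ) ^ 2 - n) m := by
    intro x
    simp only [eq_iff_iff]
    rw [show ((x + m : ℕ) : ℤ) ^ 2 - n = (x : ℤ) ^ 2 - n + m * (2 * x + m) by push_cast; ring]
    exact dvd_add_left (dvd_mul_right _ _)
  have hcount := Nat.count_mul_of_forall_dvd hq hdvd (q * m)
  rw [show q * (q * m) = q ^ 2 * m by ring] at hcount
  rw [C_eq_count (mul_ne_zero (pow_ne_zero 2 hq) hm), C_eq_count hm, hcount]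
  simp only [hmul]
  exact Nat.count_mul_of_periodic hperiodic q

theorem C_one (n : ℤ) : C 1 n = 1 :=
  Nat.card_eq_one_iff_unique.mpr ⟨inferInstance, ⟨⟨0, Subsingleton.elim _ _⟩⟩⟩

section Prime

variable {p : ℕ} [hp : Fact p.Prime]

theorem C_prime (hp2 : p ≠ 2) (u : ℤ) : (C p u : ℤ) = legendreSym p u + 1 := by
  rw [C, ← legendreSym.card_sqrts p hp2 u, Set.toFinset_card, ← Nat.card_eq_fintype_card]
  rfl

theorem C_prime_of_dvd (hp2 : p ≠ 2) {v : ℤ} (hv : (p : ℤ) ∣ v) : C p v = 1 := by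
  have hv0 : (v : ZMod p) = ((0 : ℤ) : ZMod p) := by
    rw [Int.cast_zero, ZMod.intCast_zmod_eq_zero_iff_dvd]; exact hv
  have h := C_prime hp2 0
  rw [legendreSym.at_zero, zero_add] at h
  rw [← Nat.cast_inj (R := ℤ), Nat.cast_one, ← h]
  unfold C
  rw [hv0]

theorem C_prime_pow_of_not_dvd (hp2 : p ≠ 2) {k : ℕ} (hk : k ≠ 0) {u : ℤ} (hu : ¬ (p : ℤ) ∣ u) :
    C (p ^ k) u = C p u := by
  have hcop : IsCoprime u (p : ℤ) :=
    isCoprime_comm.mp ((Nat.prime_iff_prime_int.mp hp.out).coprime_iff_not_dvd.mpr hu)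
  have hcopk : IsCoprime u ((p ^ k : ℕ) : ℤ) := by push_cast; exact hcop.pow_right
  set U := ZMod.unitOfIsCoprime u hcopk
  have hodd : Odd (Nat.card (ZMod.unitsMap (dvd_pow_self p hk)).ker) := by
    rw [ZMod.card_ker_unitsMap_prime_pow hk]; exact (hp.out.odd_of_ne_two hp2).pow
  have hsq := MonoidHom.card_sq_eq_of_odd_card_ker _
    (ZMod.unitsMap_surjective (dvd_pow_self p hk)) hodd U
  have hU : ((ZMod.unitsMap (dvd_pow_self p hk) U : (ZMod p)ˣ) : ZMod p) = u := by
    simp [ZMod.unitsMap_val, U, ZMod.cast_intCast (dvd_pow_self p hk)]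
  rw [C, C, show ((u : ZMod (p ^ k))) = U from rfl, Units.card_sq_eq, hsq, ← hU,
    ← Units.card_sq_eq]

theorem C_prime_pow_of_le (hp2 : p ≠ 2) {m k : ℕ} (hk : k ≤ 2 * m) (u : ℤ) :
    C (p ^ k) ((p : ℤ) ^ (2 * m) * u) = p ^ (k / 2) := by
  obtain ⟨a, b, hb, rfl⟩ : ∃ a b, b < 2 ∧ k = 2 * a + b :=
    ⟨k / 2, k % 2, Nat.mod_lt _ two_pos, (Nat.div_add_mod k 2).symm⟩
  have hsplit : (p : ℤ) ^ (2 * m) * u = ((p ^ a : ℕ) : ℤ) ^ 2 * ((p : ℤ) ^ (2 * (m - a)) * u) := by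
    push_cast; rw [← pow_mul, ← mul_assoc, ← pow_add]; congr 2; omega
  rw [hsplit, pow_add, pow_mul',
    C_sq_mul (pow_ne_zero _ hp.out.ne_zero) (pow_ne_zero _ hp.out.ne_zero),
    show (2 * a + b) / 2 = a by omega]
  interval_cases b
  · rw [pow_zero, C_one, mul_one]
  · rw [pow_one, C_prime_of_dvd hp2 (dvd_mul_of_dvd_left (dvd_pow_self _ (by omega)) u), mul_one]

theorem C_prime_pow_of_lt (hp2 : p ≠ 2) {m k : ℕ} (hk : 2 * m < k) {u : ℤ} (hu : ¬ (p : ℤ) ∣ u) :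
    (C (p ^ k) ((p : ℤ) ^ (2 * m) * u) : ℤ) = p ^ m * (legendreSym p u + 1) := by
  have hsplit : (p : ℤ) ^ (2 * m) * u = ((p ^ m : ℕ) : ℤ) ^ 2 * u := by push_cast; ring
  rw [hsplit, show k = 2 * m + (k - 2 * m) by omega, pow_add, pow_mul',
    C_sq_mul (pow_ne_zero _ hp.out.ne_zero) (pow_ne_zero _ hp.out.ne_zero),
    C_prime_pow_of_not_dvd hp2 (by omega) hu]
  push_cast
  rw [C_prime hp2]

end Prime

theorem sum_range_pow_half_mul_pow (P t : ℝ) (m : ℕ) :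
    ∑ k ∈ range (2 * m + 1), P ^ (k / 2) * t ^ k =
      (1 + t) * ∑ i ∈ range m, (P * t ^ 2) ^ i + (P * t ^ 2) ^ m := by
  induction m with
  | zero => simp
  | succ m ih =>
    rw [show 2 * (m + 1) + 1 = 2 * m + 1 + 1 + 1 by ring, sum_range_succ, sum_range_succ, ih,
      sum_range_succ, show (2 * m + 1) / 2 = m by omega, show (2 * m + 1 + 1) / 2 = m + 1 by omega]
    ring

theorem hasSum_of_eq_mul_pow_of_le {f : ℕ → ℝ} {t c : ℝ} (N : ℕ) (ht0 : 0 ≤ t) (ht1 : t < 1)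
    (hf : ∀ k, N ≤ k → f k = c * t ^ k) :
    HasSum f (∑ k ∈ range N, f k + c * t ^ N / (1 - t)) := by
  rw [← hasSum_nat_add_iff' N, add_sub_cancel_left]
  have htail : (fun k => f (k + N)) = fun k => c * t ^ N * t ^ k := funext fun k => by
    rw [hf _ (Nat.le_add_left N k), pow_add]; ring
  rw [htail, div_eq_mul_inv]
  exact (hasSum_geometric_of_lt_one ht0 ht1).mul_left _

theorem hasSum_local_factor {P t χ : ℝ} {m : ℕ} {a : ℕ → ℝ} (ht0 : 0 ≤ t) (ht1 : t < 1)
    (hq : P * t ^ 2 ≠ 1) (hχ : χ = 1 ∨ χ = -1) (hlow : ∀ k ≤ 2 * m, a k = P ^ (k / 2))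
    (hhigh : ∀ k, 2 * m < k → a k = P ^ m * (χ + 1)) :
    HasSum (fun k => a k * t ^ k) ((1 - t ^ 2) / (1 - t) *
      ((1 - (P * t ^ 2) ^ m) / (1 - P * t ^ 2) + (P * t ^ 2) ^ m / (1 - χ * t))) := by
  have h := hasSum_of_eq_mul_pow_of_le (f := fun k => a k * t ^ k) (2 * m + 1) ht0 ht1
    fun k hk => by rw [hhigh k hk]
  have hhead : ∑ k ∈ range (2 * m + 1), a k * t ^ k =
      ∑ k ∈ range (2 * m + 1), P ^ (k / 2) * t ^ k :=
    sum_congr rfl fun k hk => by rw [hlow k (Nat.lt_succ_iff.mp (mem_range.mp hk))]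
  have hgeom : ∑ i ∈ range m, (P * t ^ 2) ^ i = (1 - (P * t ^ 2) ^ m) / (1 - P * t ^ 2) := by
    rw [geom_sum_eq hq, ← neg_div_neg_eq, neg_sub, neg_sub]
  rw [hhead, sum_range_pow_half_mul_pow, hgeom] at h
  convert h using 1
  have h1t : 1 - t ≠ 0 := by linarith
  have h1q : 1 - P * t ^ 2 ≠ 0 := sub_ne_zero.mpr hq.symm
  rcases hχ with rfl | rfl
  · field_simp
    ring
  · have h1t' : 1 + t ≠ 0 := by linarith
    rw [neg_one_mul, sub_neg_eq_add]
    field_simp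
    ring

theorem stmt_12_general (p : ℕ) [Fact p.Prime] (hp2 : p ≠ 2)
    (r : ℕ) (hr : Even r) (n₀ : ℕ) (hpn₀ : ¬ p ∣ n₀)
    (s : ℝ) (hs : 1 / 2 < s) :
    ∑' k : ℕ, (C (p ^ k) (-((p : ℤ) ^ r * n₀)) : ℝ) * (p : ℝ) ^ (-(k : ℝ) * s) =
      ((1 - (p : ℝ) ^ (-(2 * s))) / (1 - (p : ℝ) ^ (-s))) *
        ((1 - (p : ℝ) ^ ((1 - 2 * s) * (r : ℝ) / 2)) / (1 - (p : ℝ) ^ (1 - 2 * s)) +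
          (p : ℝ) ^ ((r : ℝ) / 2 - (r : ℝ) * s) /
            (1 - (legendreSym p (-(n₀ : ℤ)) : ℝ) * (p : ℝ) ^ (-s))) := by
  obtain ⟨m, rfl⟩ := hr
  have hp1 : (1 : ℝ) < p := by exact_mod_cast (Fact.out : p.Prime).one_lt
  have hp0 : (0 : ℝ) ≤ p := by positivity
  set t := (p : ℝ) ^ (-s) with ht
  have ht1 : t < 1 := Real.rpow_lt_one_of_one_lt_of_neg hp1 (by linarith)
  have hq : (p : ℝ) ^ (1 - 2 * s) = p * t ^ 2 := by
    rw [ht, ← Real.rpow_mul_natCast hp0, ← Real.rpow_one_add' hp0 (by push_cast; linarith)]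
    push_cast; ring_nf
  have hq1 : (p : ℝ) * t ^ 2 ≠ 1 :=
    hq ▸ (Real.rpow_lt_one_of_one_lt_of_neg hp1 (by linarith)).ne
  have hu : ¬ (p : ℤ) ∣ -(n₀ : ℤ) := by rwa [dvd_neg, Int.natCast_dvd_natCast]
  have hχ : (legendreSym p (-(n₀ : ℤ)) : ℝ) = 1 ∨ (legendreSym p (-(n₀ : ℤ)) : ℝ) = -1 := by
    rcases legendreSym.eq_one_or_neg_one p ((ZMod.intCast_zmod_eq_zero_iff_dvd _ p).not.mpr hu)
      with h | h <;> simp [h]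
  have hpow : ∀ x : ℝ, ∀ k : ℕ, x = -s * k → (p : ℝ) ^ x = t ^ k := by
    rintro x k rfl; rw [Real.rpow_mul_natCast hp0]
  have hqpow : ∀ x : ℝ, x = (1 - 2 * s) * m → (p : ℝ) ^ x = (p * t ^ 2) ^ m := by
    rintro x rfl; rw [Real.rpow_mul_natCast hp0, hq]
  have hsum := hasSum_local_factor (P := (p : ℝ)) (m := m) (t := t) (by positivity) ht1 hq1 hχ
    (a := fun k => (C (p ^ k) ((p : ℤ) ^ (2 * m) * -(n₀ : ℤ)) : ℝ))
    (fun k hk => by simp only [C_prime_pow_of_le hp2 hk]; push_cast; rfl)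
    (fun k hk => by rw [← Int.cast_natCast, C_prime_pow_of_lt hp2 hk hu]; push_cast; ring)
  rw [hpow (-(2 * s)) 2 (by push_cast; ring), hqpow _ (by push_cast; ring), hq,
    hqpow _ (by push_cast; ring), ← hsum.tsum_eq]
  congr 1 with k
  rw [hpow _ k (by ring), show -((p : ℤ) ^ (m + m) * n₀) = (p : ℤ) ^ (2 * m) * -(n₀ : ℤ) by ring]

theorem stmt_12 (p : ℕ) [Fact p.Prime] (hp2 : p ≠ 2) (hp3 : p ≠ 3)
    (r : ℕ) (hr : Even r) (hrpos : 0 < r) (n₀ : ℕ) (hn₀ : 0 < n₀) (hpn₀ : ¬ p ∣ n₀)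
    (s : ℝ) (hs : 1 / 2 < s) :
    ∑' k : ℕ, (C (p ^ k) (-((p : ℤ) ^ r * n₀)) : ℝ) * (p : ℝ) ^ (-(k : ℝ) * s) =
      ((1 - (p : ℝ) ^ (-(2 * s))) / (1 - (p : ℝ) ^ (-s))) *
        ((1 - (p : ℝ) ^ ((1 - 2 * s) * (r : ℝ) / 2)) / (1 - (p : ℝ) ^ (1 - 2 * s)) +
          (p : ℝ) ^ ((r : ℝ) / 2 - (r : ℝ) * s) /
            (1 - (legendreSym p (-(n₀ : ℤ)) : ℝ) * (p : ℝ) ^ (-s))) :=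
  stmt_12_general p hp2 r hr n₀ hpn₀ s hs
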